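/- arXiv:1505.01265 — 2 statements merged into one kernel-verified Lean document; each statement's English description precedes it below -/
import Mathlib

section
/- Schrijver's number bounds the independence number: for every finite simple graph G, α(G) ≤ ϑ⁻(G). -/
open Finset

namespace SimpleGraph

variable {V W : Type*}

/-- The strong graph product. -/
def strongProd (G : SimpleGraph V) (H : SimpleGraph W) : SimpleGraph (V × W) where
  Adj x y := x ≠ y ∧ (x.1 = y.1 ∨ G.Adj x.1 y.1) ∧ (x.2 = y.2 ∨ H.Adj x.2 y.2)
  symm := ⟨by
    rintro x y ⟨hne, h1, h2⟩
    exact ⟨hne.symm, h1.imp Eq.symm (fun h => G.adj_symm h), h2.imp Eq.symm (fun h => H.adj_symm h)⟩⟩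
  loopless := ⟨by rintro x ⟨hne, -, -⟩; exact hne rfl⟩

/-- The disjunctive graph product. -/
def disjProd (G : SimpleGraph V) (H : SimpleGraph W) : SimpleGraph (V × W) where
  Adj x y := G.Adj x.1 y.1 ∨ H.Adj x.2 y.2
  symm := ⟨fun _ _ h => h.imp (fun h => G.adj_symm h) (fun h => H.adj_symm h)⟩
  loopless := ⟨fun x h => h.elim (fun h => G.irrefl h) (fun h => H.irrefl h)⟩

/-- A finite set of vertices is independent if no two of its members are adjacent. -/
def IsIndep (G : SimpleGraph V) (s : Finset V) : Prop :=
  ∀ ⦃v⦄, v ∈ s → ∀ ⦃w⦄, w ∈ s → ¬ G.Adj v w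

/-- The independence number. -/
noncomputable def alpha (G : SimpleGraph V) [Fintype V] : ℕ :=
  sSup {n | ∃ s : Finset V, G.IsIndep s ∧ s.card = n}

/-- The fractional packing number. -/
noncomputable def alphaStar (G : SimpleGraph V) [Fintype V] : ℝ :=
  sSup {x | ∃ t : V → ℝ, (∀ v, 0 ≤ t v) ∧
    (∀ C : Finset V, G.IsClique (C : Set V) → ∑ v ∈ C, t v ≤ 1) ∧ x = ∑ v, t v}

/-- The Lovász number. -/
noncomputable def lovTheta (G : SimpleGraph V) [Fintype V] : ℝ :=
  sSup {x | ∃ B : Matrix V V ℝ, B.PosSemidef ∧ B.trace = 1 ∧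
    (∀ v w, G.Adj v w → B v w = 0) ∧ x = ∑ v, ∑ w, B v w}

/-- Schrijver's variant of the Lovász number. -/
noncomputable def thetaMinus (G : SimpleGraph V) [Fintype V] : ℝ :=
  sSup {x | ∃ B : Matrix V V ℝ, B.PosSemidef ∧ B.trace = 1 ∧ (∀ v w, 0 ≤ B v w) ∧
    (∀ v w, G.Adj v w → B v w = 0) ∧ x = ∑ v, ∑ w, B v w}

/-- Szegedy's variant of the Lovász number. -/
noncomputable def thetaPlus (G : SimpleGraph V) [Fintype V] : ℝ :=
  sSup {x | ∃ B : Matrix V V ℝ, B.PosSemidef ∧ B.trace = 1 ∧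
    (∀ v w, G.Adj v w → B v w ≤ 0) ∧ x = ∑ v, ∑ w, B v w}

/-- The clique covering number. -/
noncomputable def cliqueCoverNum (G : SimpleGraph V) [Fintype V] : ℕ :=
  sInf {n | ∃ C : Fin n → Finset V, (∀ i, G.IsClique (C i : Set V)) ∧ ∀ v, ∃ i, v ∈ C i}

/-- The blow-up of a graph along integer vertex weights. -/
def blup (G : SimpleGraph V) (p : V → ℕ) : SimpleGraph (Σ v, Fin (p v)) where
  Adj x y := G.Adj x.1 y.1
  symm := ⟨fun _ _ h => G.adj_symm h⟩
  loopless := ⟨fun x h => G.irrefl h⟩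

/-- The weighted independence number (integer weights). -/
noncomputable def alphaWNat (G : SimpleGraph V) [Fintype V] (p : V → ℕ) : ℕ :=
  sSup {n | ∃ s : Finset V, G.IsIndep s ∧ n = ∑ v ∈ s, p v}

/-- The weighted independence number (real weights). -/
noncomputable def alphaW (G : SimpleGraph V) [Fintype V] (p : V → ℝ) : ℝ :=
  sSup {x | ∃ s : Finset V, G.IsIndep s ∧ x = ∑ v ∈ s, p v}

end SimpleGraph

open SimpleGraph
open scoped RealInnerProductSpace
/-! If `s` is independent, the rescaled indicator matrix `|s|⁻¹ • 𝟙ₛ 𝟙ₛᵀ` is feasible for `ϑ⁻` and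
has entry sum `|s|`. The supremum defining `ϑ⁻` is a genuine bound because positive semidefiniteness
gives `2 B v w ≤ B v v + B w w`, so every feasible entry sum is at most `|V|`. -/

open Matrix

namespace Matrix.PosSemidef

variable {n R : Type*} [Fintype n] [CommRing R] [LinearOrder R] [IsStrictOrderedRing R]
  [StarRing R] [TrivialStar R] {B : Matrix n n R}

theorem two_mul_apply_le (hB : B.PosSemidef) (i j : n) : 2 * B i j ≤ B i i + B j j := by
  classical
  have hsymm : B j i = B i j := by
    simpa using congrFun (congrFun hB.isHermitian i) j
  have h := hB.dotProduct_mulVec_nonneg (Pi.single i 1 - Pi.single j 1)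
  simp only [star_trivial, mulVec_sub, mulVec_single, MulOpposite.op_one, one_smul,
    dotProduct_sub, sub_dotProduct, single_dotProduct, one_mul, col_apply] at h
  linarith

theorem sum_apply_le_card_mul_trace (hB : B.PosSemidef) :
    ∑ i, ∑ j, B i j ≤ Fintype.card n * B.trace := by
  have hdiag : ∑ i, ∑ j, (B i i + B j j) = 2 * (Fintype.card n * B.trace) := by
    simp only [Finset.sum_add_distrib, Finset.sum_const, Finset.card_univ, nsmul_eq_mul,
      ← Finset.mul_sum, trace, diag]
    ring
  have h2 : 2 * ∑ i, ∑ j, B i j ≤ 2 * (Fintype.card n * B.trace) := by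
    rw [Finset.mul_sum, ← hdiag]
    gcongr with i _
    rw [Finset.mul_sum]
    gcongr with j _
    exact hB.two_mul_apply_le i j
  exact le_of_mul_le_mul_left h2 two_pos

end Matrix.PosSemidef

namespace SimpleGraph

variable {V : Type*} [Fintype V] {G : SimpleGraph V}

theorem sum_le_thetaMinus {B : Matrix V V ℝ} (hB : B.PosSemidef) (htr : B.trace = 1)
    (hnonneg : ∀ v w, 0 ≤ B v w) (hadj : ∀ v w, G.Adj v w → B v w = 0) :
    ∑ v, ∑ w, B v w ≤ G.thetaMinus := by
  refine le_csSup ⟨Fintype.card V, ?_⟩ ⟨B, hB, htr, hnonneg, hadj, rfl⟩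
  rintro x ⟨B', hB', htr', -, -, rfl⟩
  simpa [htr'] using hB'.sum_apply_le_card_mul_trace

theorem thetaMinus_nonneg : 0 ≤ G.thetaMinus :=
  Real.sSup_nonneg <| by
    rintro x ⟨B, -, -, hnonneg, -, rfl⟩
    exact Finset.sum_nonneg fun v _ => Finset.sum_nonneg fun w _ => hnonneg v w

theorem IsIndep.card_le_thetaMinus {s : Finset V} (hs : G.IsIndep s) :
    (s.card : ℝ) ≤ G.thetaMinus := by
  classical
  rcases s.eq_empty_or_nonempty with rfl | hne
  · simpa using thetaMinus_nonneg
  have hcard : (s.card : ℝ) ≠ 0 := by exact_mod_cast hne.card_ne_zero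
  set χ : V → ℝ := fun v => if v ∈ s then 1 else 0
  have hχsum : ∑ v, χ v = s.card := by simp [χ]
  set B : Matrix V V ℝ := (s.card : ℝ)⁻¹ • vecMulVec χ χ
  have hB : B.PosSemidef := by
    simpa using (posSemidef_vecMulVec_self_star χ).smul (inv_nonneg.2 s.card.cast_nonneg)
  have htr : B.trace = 1 := by
    have : ∀ v, χ v * χ v = χ v := fun v => by by_cases hv : v ∈ s <;> simp [χ, hv]
    simp [B, trace, vecMulVec_apply, this, ← Finset.mul_sum, hχsum, hcard]
  have hnonneg : ∀ v w, 0 ≤ B v w := fun v w => by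
    simp only [B, Matrix.smul_apply, vecMulVec_apply, χ, smul_eq_mul]
    split_ifs <;> positivity
  have hadj : ∀ v w, G.Adj v w → B v w = 0 := fun v w h => by
    by_cases hv : v ∈ s
    · by_cases hw : w ∈ s
      · exact absurd h (hs hv hw)
      · simp [B, χ, vecMulVec_apply, hw]
    · simp [B, χ, vecMulVec_apply, hv]
  have hsum : ∑ v, ∑ w, B v w = s.card := by
    simp only [B, Matrix.smul_apply, vecMulVec_apply, smul_eq_mul, ← Finset.mul_sum,
      ← Finset.sum_mul, hχsum]
    field_simp
  exact hsum ▸ sum_le_thetaMinus hB htr hnonneg hadj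

theorem exists_isIndep_card_eq_alpha (G : SimpleGraph V) :
    ∃ s : Finset V, G.IsIndep s ∧ s.card = G.alpha :=
  Nat.sSup_mem (s := {n | ∃ s : Finset V, G.IsIndep s ∧ s.card = n}) ⟨0, ∅, by simp [IsIndep]⟩
    ⟨Fintype.card V, by rintro n ⟨s, -, rfl⟩; exact s.card_le_univ⟩

end SimpleGraph

theorem alpha_le_thetaMinus {V : Type*} [Fintype V] (G : SimpleGraph V) :
    (G.alpha : ℝ) ≤ G.thetaMinus := by
  obtain ⟨s, hs, hcard⟩ := G.exists_isIndep_card_eq_alpha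
  exact hcard ▸ hs.card_le_thetaMinus
end

section
/- For any graph G, ϑ⁺(G) equals the maximum of Σ_v |⟨h, φ_v⟩|² over all obtuse representations {φ_v} of the complement Ḡ together with a consistent unit vector h. In particular, from any optimal primal SDP solution B for ϑ⁺(G) one constructs such a representation with value at least tr(BJ), and conversely from any such representation one constructs a feasible B with tr(BJ) at least the representation's value. -/
/-!
A feasible `B` for `ϑ⁺(G)` is the Gram matrix of vectors `b_v` with `∑ ‖b_v‖² = 1` that are
obtuse along the edges of `G`, and `tr (B J) = ‖s‖²` for `s = ∑ b_v`. Normalising `s` and the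
`b_v` with `⟪s, b_v⟫ > 0`, and sending the other vertices to fresh orthonormal directions, gives
an obtuse representation with consistent unit vector `s / ‖s‖`; by Cauchy–Schwarz in
Sedrakyan's form its value is at least `‖s‖²`. Conversely, a representation `(φ, h)` of value
`x > 0` yields the vectors `ψ_v = ⟪h, φ_v⟫ φ_v / √x`, whose Gram matrix is feasible, and
`⟪h, ∑_v ψ_v⟫ = √x` shows that its value `‖∑_v ψ_v‖²` is at least `x`.
-/

open Finset

open SimpleGraph
open scoped RealInnerProductSpace

theorem Real.sSup_le_sSup_of_forall_exists_le {s t : Set ℝ} (ht₀ : ∀ y ∈ t, 0 ≤ y)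
    (ht : BddAbove t) (hst : ∀ x ∈ s, 0 < x → ∃ y ∈ t, x ≤ y) : sSup s ≤ sSup t := by
  refine Real.sSup_le (fun x hx => ?_) (Real.sSup_nonneg ht₀)
  rcases le_or_gt x 0 with hx₀ | hx₀
  · exact hx₀.trans (Real.sSup_nonneg ht₀)
  · obtain ⟨y, hy, hxy⟩ := hst x hx hx₀
    exact hxy.trans (le_csSup ht hy)

-- Only positive values need dominating: `sSup` of a set of nonnegative reals is nonnegative,
-- also when the set is empty.
theorem Real.sSup_eq_sSup_of_forall_exists_le {s t : Set ℝ} (hs₀ : ∀ x ∈ s, 0 ≤ x)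
    (ht₀ : ∀ y ∈ t, 0 ≤ y) (ht : BddAbove t) (hst : ∀ x ∈ s, 0 < x → ∃ y ∈ t, x ≤ y)
    (hts : ∀ y ∈ t, 0 < y → ∃ x ∈ s, y ≤ x) : sSup s = sSup t := by
  obtain ⟨M, hM⟩ := ht
  have hs : BddAbove s := ⟨max 0 M, fun x hx => by
    rcases le_or_gt x 0 with hx₀ | hx₀
    · exact hx₀.trans (le_max_left 0 M)
    · obtain ⟨y, hy, hxy⟩ := hst x hx hx₀
      exact hxy.trans ((hM hy).trans (le_max_right 0 M))⟩
  exact le_antisymm (Real.sSup_le_sSup_of_forall_exists_le ht₀ ⟨M, hM⟩ hst)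
    (Real.sSup_le_sSup_of_forall_exists_le hs₀ hs hts)

open scoped ComplexOrder MatrixOrder in
theorem Matrix.PosSemidef.exists_eq_gram {𝕜 n : Type*} [RCLike 𝕜] [Fintype n] [DecidableEq n]
    {B : Matrix n n 𝕜} (hB : B.PosSemidef) : ∃ b : n → EuclideanSpace 𝕜 n, B = gram 𝕜 b := by
  obtain ⟨C, rfl⟩ := CStarAlgebra.nonneg_iff_eq_star_mul_self.mp hB.nonneg
  refine ⟨fun v => WithLp.toLp 2 fun u => C u v, ?_⟩
  ext v w
  simp [Matrix.gram_apply, Matrix.mul_apply, PiLp.inner_apply, mul_comm]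

section Gram

variable {ι E : Type*} [Fintype ι] [NormedAddCommGroup E] [InnerProductSpace ℝ E]

theorem Matrix.trace_gram (b : ι → E) : (Matrix.gram ℝ b).trace = ∑ i, ‖b i‖ ^ 2 := by
  simp [Matrix.trace, Matrix.gram_apply]

theorem Matrix.sum_sum_gram (b : ι → E) : ∑ i, ∑ j, Matrix.gram ℝ b i j = ‖∑ i, b i‖ ^ 2 := by
  rw [← real_inner_self_eq_norm_sq, sum_inner]
  simp only [Matrix.gram_apply, inner_sum]

end Gram

theorem norm_sum_pow_four_le {ι E : Type*} [NormedAddCommGroup E] [InnerProductSpace ℝ E]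
    (s : Finset ι) (b : ι → E) (hb : ∑ i ∈ s, ‖b i‖ ^ 2 ≤ 1) :
    ‖∑ i ∈ s, b i‖ ^ 4 ≤
      ∑ i ∈ s with 0 < ⟪∑ j ∈ s, b j, b i⟫, (⟪∑ j ∈ s, b j, b i⟫ / ‖b i‖) ^ 2 := by
  set S := ∑ j ∈ s, b j
  set T := s.filter fun i => 0 < ⟪S, b i⟫
  have hST : ‖S‖ ^ 2 ≤ ∑ i ∈ T, ⟪S, b i⟫ := by
    rw [← real_inner_self_eq_norm_sq, inner_sum, ← sum_filter_add_sum_filter_not s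
      (fun i => 0 < ⟪S, b i⟫)]
    exact add_le_of_nonpos_right (sum_nonpos fun i hi => not_lt.mp (mem_filter.mp hi).2)
  have hbT : ∀ i ∈ T, 0 < ‖b i‖ ^ 2 := fun i hi => by
    have := (mem_filter.mp hi).2
    have : b i ≠ 0 := by rintro h; simp [h] at this
    positivity
  rcases T.eq_empty_or_nonempty with hT | hT
  · rw [hT, sum_empty] at hST ⊢
    nlinarith [sq_nonneg ‖S‖]
  calc ‖S‖ ^ 4 = (‖S‖ ^ 2) ^ 2 := by ring
    _ ≤ (∑ i ∈ T, ⟪S, b i⟫) ^ 2 := pow_le_pow_left₀ (by positivity) hST 2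
    _ ≤ (∑ i ∈ T, ⟪S, b i⟫) ^ 2 / ∑ i ∈ T, ‖b i‖ ^ 2 :=
      le_div_self (sq_nonneg _) (sum_pos hbT hT)
        ((sum_le_sum_of_subset_of_nonneg (filter_subset _ s) fun _ _ _ => sq_nonneg _).trans hb)
    _ ≤ ∑ i ∈ T, ⟪S, b i⟫ ^ 2 / ‖b i‖ ^ 2 := sq_sum_div_le_sum_sq_div T _ hbT
    _ = ∑ i ∈ T, (⟪S, b i⟫ / ‖b i‖) ^ 2 := by simp only [div_pow]

namespace SimpleGraph

open NormedSpace

variable {V : Type*} [Fintype V] (G : SimpleGraph V)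

def thetaPlusValues : Set ℝ :=
  {x | ∃ B : Matrix V V ℝ, B.PosSemidef ∧ B.trace = 1 ∧
    (∀ v w, G.Adj v w → B v w ≤ 0) ∧ x = ∑ v, ∑ w, B v w}

def obtuseRepValues : Set ℝ :=
  {x | ∃ (d : ℕ) (φ : V → EuclideanSpace ℝ (Fin d)) (h : EuclideanSpace ℝ (Fin d)),
    (∀ v, ‖φ v‖ = 1) ∧ (∀ v w, G.Adj v w → ⟪φ v, φ w⟫ ≤ 0) ∧
    ‖h‖ = 1 ∧ (∀ v, 0 ≤ ⟪h, φ v⟫) ∧ x = ∑ v, ⟪h, φ v⟫ ^ 2}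

variable {G}

theorem norm_sq_sum_mem_thetaPlusValues {E : Type*} [NormedAddCommGroup E]
    [InnerProductSpace ℝ E] {ψ : V → E} (hψ : ∑ v, ‖ψ v‖ ^ 2 = 1)
    (hadj : ∀ v w, G.Adj v w → ⟪ψ v, ψ w⟫ ≤ 0) : ‖∑ v, ψ v‖ ^ 2 ∈ G.thetaPlusValues :=
  ⟨Matrix.gram ℝ ψ, Matrix.posSemidef_gram ℝ ψ, (Matrix.trace_gram ψ).trans hψ, hadj,
    (Matrix.sum_sum_gram ψ).symm⟩

theorem exists_gram_of_mem_thetaPlusValues {x : ℝ} (hx : x ∈ G.thetaPlusValues) :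
    ∃ b : V → EuclideanSpace ℝ V, ∑ v, ‖b v‖ ^ 2 = 1 ∧
      (∀ v w, G.Adj v w → ⟪b v, b w⟫ ≤ 0) ∧ x = ‖∑ v, b v‖ ^ 2 := by
  classical
  obtain ⟨B, hB, htr, hadj, rfl⟩ := hx
  obtain ⟨b, rfl⟩ := hB.exists_eq_gram
  exact ⟨b, (Matrix.trace_gram b).symm.trans htr, hadj, Matrix.sum_sum_gram b⟩

theorem nonneg_of_mem_thetaPlusValues {x : ℝ} (hx : x ∈ G.thetaPlusValues) : 0 ≤ x := by
  obtain ⟨b, -, -, rfl⟩ := exists_gram_of_mem_thetaPlusValues hx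
  positivity

theorem sum_inner_sq_mem_obtuseRepValues {E : Type*} [NormedAddCommGroup E]
    [InnerProductSpace ℝ E] [FiniteDimensional ℝ E] {φ : V → E} {h : E}
    (hφ : ∀ v, ‖φ v‖ = 1) (hadj : ∀ v w, G.Adj v w → ⟪φ v, φ w⟫ ≤ 0) (hh : ‖h‖ = 1)
    (hcons : ∀ v, 0 ≤ ⟪h, φ v⟫) : ∑ v, ⟪h, φ v⟫ ^ 2 ∈ G.obtuseRepValues := by
  let e := (stdOrthonormalBasis ℝ E).repr
  refine ⟨_, fun v => e (φ v), e h, by simpa using hφ, by simpa using hadj, by simpa using hh,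
    by simpa using hcons, by simp⟩

theorem sum_inner_sq_mem_obtuseRepValues_of_finset {E : Type*} [NormedAddCommGroup E]
    [InnerProductSpace ℝ E] [FiniteDimensional ℝ E] {T : Finset V} {ψ : V → E} {h : E}
    (hψ : ∀ v ∈ T, ‖ψ v‖ = 1) (hadj : ∀ v ∈ T, ∀ w ∈ T, G.Adj v w → ⟪ψ v, ψ w⟫ ≤ 0)
    (hh : ‖h‖ = 1) (hcons : ∀ v ∈ T, 0 ≤ ⟪h, ψ v⟫) :
    ∑ v ∈ T, ⟪h, ψ v⟫ ^ 2 ∈ G.obtuseRepValues := by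
  classical
  let φ : V → WithLp 2 (E × EuclideanSpace ℝ V) := fun v =>
    if v ∈ T then WithLp.toLp 2 (ψ v, 0) else WithLp.toLp 2 (0, EuclideanSpace.single v 1)
  have hφh : ∀ v, ⟪WithLp.toLp 2 (h, 0), φ v⟫ = if v ∈ T then ⟪h, ψ v⟫ else 0 := fun v => by
    by_cases hv : v ∈ T <;> simp [φ, hv]
  have hval : ∑ v ∈ T, ⟪h, ψ v⟫ ^ 2 = ∑ v, ⟪WithLp.toLp 2 (h, 0), φ v⟫ ^ 2 := by
    simp [hφh, ite_pow]
  rw [hval]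
  refine sum_inner_sq_mem_obtuseRepValues (fun v => ?_) (fun v w hvw => ?_) ?_ (fun v => ?_)
  · by_cases hv : v ∈ T
    · simp [φ, hv, hψ v hv]
    · simp [φ, hv]
  · by_cases hv : v ∈ T <;> by_cases hw : w ∈ T
    · simpa [φ, hv, hw] using hadj v hv w hw hvw
    all_goals simp [φ, hv, hw, EuclideanSpace.inner_single_left, hvw.ne']
  · simp [hh]
  · rw [hφh]
    split_ifs with hv
    exacts [hcons v hv, le_rfl]

theorem nonneg_of_mem_obtuseRepValues {y : ℝ} (hy : y ∈ G.obtuseRepValues) : 0 ≤ y := by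
  obtain ⟨d, φ, h, -, -, -, -, rfl⟩ := hy
  positivity

theorem bddAbove_obtuseRepValues : BddAbove G.obtuseRepValues := by
  refine ⟨Fintype.card V, ?_⟩
  rintro y ⟨d, φ, h, hφ, -, hh, -, rfl⟩
  have hle : ∀ v, ⟪h, φ v⟫ ^ 2 ≤ 1 := fun v => by
    rw [sq_le_one_iff_abs_le_one]
    simpa [hh, hφ v] using abs_real_inner_le_norm h (φ v)
  simpa using sum_le_sum fun v (_ : v ∈ univ) => hle v

theorem exists_mem_obtuseRepValues_ge {x : ℝ} (hx : x ∈ G.thetaPlusValues) (hx₀ : 0 < x) :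
    ∃ y ∈ G.obtuseRepValues, x ≤ y := by
  obtain ⟨b, hb, hadj, rfl⟩ := exists_gram_of_mem_thetaPlusValues hx
  set s := ∑ v, b v
  have hs : s ≠ 0 := fun h => by simp [h] at hx₀
  set T := univ.filter fun v => 0 < ⟪s, b v⟫
  have hbT : ∀ v ∈ T, b v ≠ 0 := fun v hv h => by simpa [h] using (mem_filter.mp hv).2
  have hinner : ∀ v, ⟪normalize s, normalize (b v)⟫ = ‖s‖⁻¹ * (⟪s, b v⟫ / ‖b v‖) := fun v => by
    rw [NormedSpace.normalize, NormedSpace.normalize, real_inner_smul_left, real_inner_smul_right,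
      div_eq_inv_mul]
  refine ⟨_, sum_inner_sq_mem_obtuseRepValues_of_finset (T := T) (ψ := fun v => normalize (b v))
    (fun v hv => norm_normalize (hbT v hv)) (fun v _ w _ hvw => ?_) (norm_normalize hs)
    (fun v hv => ?_), ?_⟩
  · rw [NormedSpace.normalize, NormedSpace.normalize, real_inner_smul_left, real_inner_smul_right]
    exact mul_nonpos_of_nonneg_of_nonpos (by positivity)
      (mul_nonpos_of_nonneg_of_nonpos (by positivity) (hadj v w hvw))
  · rw [hinner]
    have := (mem_filter.mp hv).2
    positivity
  · simp only [hinner, mul_pow, ← mul_sum]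
    calc ‖s‖ ^ 2 = (‖s‖⁻¹) ^ 2 * ‖s‖ ^ 4 := by field_simp [norm_ne_zero_iff.mpr hs]
      _ ≤ _ := mul_le_mul_of_nonneg_left (norm_sum_pow_four_le univ b hb.le) (by positivity)

theorem exists_mem_thetaPlusValues_ge {y : ℝ} (hy : y ∈ G.obtuseRepValues) (hy₀ : 0 < y) :
    ∃ x ∈ G.thetaPlusValues, y ≤ x := by
  obtain ⟨d, φ, h, hφ, hadj, hh, hcons, rfl⟩ := hy
  set y := ∑ v, ⟪h, φ v⟫ ^ 2
  have ht : (√y)⁻¹ ^ 2 * y = 1 := by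
    rw [inv_pow, Real.sq_sqrt hy₀.le, inv_mul_cancel₀ hy₀.ne']
  refine ⟨_, norm_sq_sum_mem_thetaPlusValues (ψ := fun v => ((√y)⁻¹ * ⟪h, φ v⟫) • φ v) ?_
    (fun v w hvw => ?_), ?_⟩
  · simp only [norm_smul, hφ, mul_one, Real.norm_eq_abs, sq_abs, mul_pow, ← mul_sum]
    exact ht
  · rw [real_inner_smul_left, real_inner_smul_right]
    have := hcons v
    have := hcons w
    exact mul_nonpos_of_nonneg_of_nonpos (by positivity)
      (mul_nonpos_of_nonneg_of_nonpos (by positivity) (hadj v w hvw))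
  · have hsum : ⟪h, ∑ v, ((√y)⁻¹ * ⟪h, φ v⟫) • φ v⟫ = √y := by
      simp only [inner_sum, real_inner_smul_right, mul_assoc, ← sq, ← mul_sum]
      rw [inv_mul_eq_div]
      exact Real.div_sqrt
    have := real_inner_le_norm h (∑ v, ((√y)⁻¹ * ⟪h, φ v⟫) • φ v)
    rw [hsum, hh, one_mul] at this
    calc y = √y ^ 2 := (Real.sq_sqrt hy₀.le).symm
      _ ≤ _ := pow_le_pow_left₀ (Real.sqrt_nonneg y) this 2

end SimpleGraph

theorem thetaPlus_eq_obtuse_rep {V : Type*} [Fintype V] (G : SimpleGraph V) :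
    G.thetaPlus = sSup {x : ℝ | ∃ (d : ℕ) (φ : V → EuclideanSpace ℝ (Fin d))
      (h : EuclideanSpace ℝ (Fin d)),
      (∀ v, ‖φ v‖ = 1) ∧ (∀ v w, G.Adj v w → ⟪φ v, φ w⟫ ≤ 0) ∧
      ‖h‖ = 1 ∧ (∀ v, 0 ≤ ⟪h, φ v⟫) ∧ x = ∑ v, ⟪h, φ v⟫ ^ 2} :=
  Real.sSup_eq_sSup_of_forall_exists_le (fun _ => nonneg_of_mem_thetaPlusValues)
    (fun _ => nonneg_of_mem_obtuseRepValues) bddAbove_obtuseRepValues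
    (fun _ => exists_mem_obtuseRepValues_ge) (fun _ => exists_mem_thetaPlusValues_ge)
end
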